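/- Let n ≥ 2 and N = 2^n. The periodic state Ψ^n_{N/2−1,1} (shift l = N/2 − 1, period r = 1), whose amplitude is 1/√(N/2+1) at every x with N/2 − 1 ≤ x < N and 0 elsewhere, satisfies Ψ^n_{N/2−1,1} = (1/√(N/2+1)) ( e_{N/2−1} + √(N/2) · |1⟩ ⊗ |+⟩^{⊗(n−1)} ) and is SLOCC-equivalent to GHZ_n. -/

import Mathlib

/-! The periodic state is proportional to `|0 1…1⟩ + |1⟩ ⊗ (|0⟩ + |1⟩)^{⊗(n-1)}`, a sum
of two product states, and local operators act factorwise on product states. The invertible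
matrix `!![-1, 1; 1, 0]` sends `|1⟩ ↦ |0⟩` and `|0⟩ + |1⟩ ↦ |1⟩`, so the identity on the
first qubit and this matrix on the others maps the two summands to `|0…0⟩` and `|1…1⟩`,
hence the periodic state to a multiple of `GHZ_n`. -/

open scoped BigOperators

noncomputable section

/-- `bit n i x` is the i-th binary digit of `x`, counted from the most significant. -/
def bit (n : ℕ) (i : Fin n) (x : Fin (2^n)) : Fin 2 :=
  ⟨((x : ℕ) / 2^(n - 1 - (i : ℕ))) % 2, Nat.mod_lt _ (by norm_num)⟩

/-- An n-qubit state is separable if its amplitudes factor as a product over the qubits. -/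
def Separable (n : ℕ) (ψ : Fin (2^n) → ℂ) : Prop :=
  ∃ v : Fin n → Fin 2 → ℂ, ∀ x, ψ x = ∏ i, v i (bit n i x)

/-- The periodic state with shift `l` and period `r`:
amplitude `1/√A` at `x = l + i·r` for `0 ≤ i < A`, with `A = ⌈(2^n - l)/r⌉`. -/
def periodicState (n l r : ℕ) : Fin (2^n) → ℂ := fun x =>
  if ∃ i < (2^n - l + r - 1) / r, (x : ℕ) = l + i * r
  then (1 : ℂ) / Real.sqrt (((2^n - l + r - 1) / r : ℕ)) else 0

/-- Quantum Fourier transform of an n-qubit state. -/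
def QFT (n : ℕ) (ψ : Fin (2^n) → ℂ) : Fin (2^n) → ℂ := fun y =>
  (1 / (Real.sqrt (2^n) : ℝ) : ℂ) * ∑ x : Fin (2^n),
    Complex.exp (2 * Real.pi * Complex.I * (x : ℕ) * (y : ℕ) / ((2^n : ℕ) : ℂ)) * ψ x

/-- The generalized GHZ state. -/
def GHZ (n : ℕ) : Fin (2^n) → ℂ := fun x =>
  if (x : ℕ) = 0 ∨ (x : ℕ) = 2^n - 1 then (1 : ℂ) / Real.sqrt 2 else 0

/-- SLOCC equivalence of two n-qubit states. -/
def SLOCCEquiv (n : ℕ) (ψ φ : Fin (2^n) → ℂ) : Prop :=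
  ∃ (g : Fin n → Matrix (Fin 2) (Fin 2) ℂ) (c : ℂ),
    c ≠ 0 ∧ (∀ i, IsUnit (g i)) ∧
    ∀ x, φ x = c * ∑ y : Fin (2^n), (∏ i, g i (bit n i x) (bit n i y)) * ψ y

open Matrix

lemma bit_bijective {n : ℕ} :
    Function.Bijective fun (x : Fin (2^n)) (i : Fin n) => bit n i x := by
  have h : (fun (x : Fin (2^n)) (i : Fin n) => bit n i x) =
      finFunctionFinEquiv.symm.trans (Fin.revPerm.arrowCongr (Equiv.refl (Fin 2))) := by
    ext x i
    -- `finFunctionFinEquiv` lists the digits least significant first, `bit` most significant first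
    simp only [bit, Equiv.trans_apply, Equiv.arrowCongr_apply, Function.comp_apply,
      Fin.revPerm_symm, Fin.revPerm_apply, Equiv.refl_apply]
    show _ = (x : ℕ) / 2 ^ (i.rev : ℕ) % 2
    rw [Fin.val_rev]
    congr 3
    omega
  rw [h]
  exact Equiv.bijective _

lemma sum_prod_bit {n : ℕ} {R : Type*} [CommSemiring R] (f : Fin n → Fin 2 → R) :
    ∑ x : Fin (2^n), ∏ i, f i (bit n i x) = ∏ i, ∑ b, f i b := by
  rw [Fintype.prod_sum]
  exact Fintype.sum_bijective _ bit_bijective _ _ fun _ => rfl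

def twoPowSubOne (n k : ℕ) (hk : k ≤ n) : Fin (2^n) :=
  ⟨2^k - 1, (Nat.sub_lt (Nat.two_pow_pos k) one_pos).trans_le (Nat.pow_le_pow_right two_pos hk)⟩

lemma bit_twoPowSubOne {n k : ℕ} (hk : k ≤ n) (i : Fin n) :
    bit n i (twoPowSubOne n k hk) = if n - 1 - i < k then 1 else 0 := by
  apply Fin.ext
  rw [bit, Fin.val_mk, twoPowSubOne, Fin.val_mk, ← Nat.toNat_testBit, Nat.testBit_two_pow_sub_one]
  split_ifs with h <;> simp [h]

lemma bit_zero_eq_one_iff {n : ℕ} (hn : 0 < n) (x : Fin (2^n)) :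
    bit n ⟨0, hn⟩ x = 1 ↔ 2^(n-1) ≤ (x : ℕ) := by
  have hx : (x : ℕ) < 2 * 2^(n-1) := by
    rw [← pow_succ', Nat.sub_add_cancel hn]; exact x.2
  have hdiv : (x : ℕ) / 2^(n-1) < 2 := Nat.div_lt_of_lt_mul (by rw [mul_comm]; exact hx)
  rw [Fin.ext_iff, bit, Fin.val_mk, Fin.val_one, Nat.sub_zero, Nat.mod_eq_of_lt hdiv,
    ← Nat.one_le_div_iff (Nat.two_pow_pos _)]
  omega

section ProductStates

variable {R : Type*} [CommSemiring R]

def productState (n : ℕ) (v : Fin n → Fin 2 → R) : Fin (2^n) → R :=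
  fun x => ∏ i, v i (bit n i x)

/-- `⨂ᵢ g i` in the computational basis, qubit `0` being the most significant. -/
def localMatrix (n : ℕ) (g : Fin n → Matrix (Fin 2) (Fin 2) R) :
    Matrix (Fin (2^n)) (Fin (2^n)) R :=
  Matrix.of fun x y => ∏ i, g i (bit n i x) (bit n i y)

lemma localMatrix_mulVec_productState {n : ℕ} (g : Fin n → Matrix (Fin 2) (Fin 2) R)
    (v : Fin n → Fin 2 → R) :
    localMatrix n g *ᵥ productState n v = productState n fun i => g i *ᵥ v i := by
  ext x
  simp only [mulVec, dotProduct, localMatrix, productState, of_apply, ← Finset.prod_mul_distrib]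
  exact sum_prod_bit fun i b => g i (bit n i x) b * v i b

lemma productState_single_bit {n : ℕ} (m : Fin (2^n)) :
    productState n (fun i => Pi.single (bit n i m) (1 : R)) = Pi.single m 1 := by
  ext x
  have hbits : (∀ i, bit n i x = bit n i m) ↔ x = m :=
    funext_iff.symm.trans bit_bijective.injective.eq_iff
  simp only [productState, Pi.single_apply, Finset.prod_boole, Finset.mem_univ, true_implies,
    hbits]

lemma productState_const_single {n : ℕ} {b : Fin 2} {m : Fin (2^n)} (hm : ∀ i, bit n i m = b) :
    productState n (fun _ => Pi.single b (1 : R)) = Pi.single m 1 := by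
  rw [← productState_single_bit m]
  simp only [hm]

end ProductStates

lemma sloccEquiv_of_eq_smul_mulVec {n : ℕ} {ψ φ : Fin (2^n) → ℂ}
    {g : Fin n → Matrix (Fin 2) (Fin 2) ℂ} {c : ℂ} (hc : c ≠ 0) (hg : ∀ i, IsUnit (g i))
    (h : φ = c • (localMatrix n g *ᵥ ψ)) : SLOCCEquiv n ψ φ :=
  ⟨g, c, hc, hg, fun x => by rw [h]; rfl⟩

lemma periodicState_one (n l : ℕ) (x : Fin (2^n)) :
    periodicState n l 1 x =
      if l ≤ (x : ℕ) then (1 : ℂ) / Real.sqrt ((2^n - l : ℕ) : ℝ) else 0 := by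
  have hx := x.2
  have hcond : (∃ i < 2^n - l, (x : ℕ) = l + i * 1) ↔ l ≤ x :=
    ⟨fun ⟨i, _, h⟩ => by omega, fun h => ⟨x - l, by omega, by omega⟩⟩
  simp only [periodicState, Nat.add_sub_cancel, Nat.div_one, hcond]

def oneTensorPlus (n : ℕ) : Fin n → Fin 2 → ℂ :=
  fun i => if (i : ℕ) = 0 then Pi.single 1 1 else 1

lemma productState_oneTensorPlus {n : ℕ} (hn : 0 < n) (x : Fin (2^n)) :
    productState n (oneTensorPlus n) x = if 2^(n-1) ≤ (x : ℕ) then 1 else 0 := by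
  have hfirst : ∀ i : Fin n, (i : ℕ) = 0 ↔ i = ⟨0, hn⟩ := fun i => by simp [Fin.ext_iff]
  simp only [productState, oneTensorPlus, hfirst, ite_apply, Pi.one_apply,
    Finset.prod_ite_eq', Finset.mem_univ, if_true, Pi.single_apply, bit_zero_eq_one_iff hn]

lemma periodicState_half_sub_one {n : ℕ} (hn : 0 < n) :
    periodicState n (2^(n-1) - 1) 1 = ((1 : ℂ) / Real.sqrt (2^(n-1) + 1)) •
      (Pi.single (twoPowSubOne n (n-1) (Nat.sub_le n 1)) 1 + productState n (oneTensorPlus n)) := by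
  have hpow : 2^n = 2 * 2^(n-1) := by rw [← pow_succ', Nat.sub_add_cancel hn]
  have hone : 1 ≤ 2^(n-1) := Nat.one_le_two_pow
  have hlen : 2^n - (2^(n-1) - 1) = 2^(n-1) + 1 := by omega
  ext x
  simp only [periodicState_one, hlen, Pi.smul_apply, Pi.add_apply, Pi.single_apply,
    productState_oneTensorPlus hn, Fin.ext_iff, twoPowSubOne, smul_eq_mul]
  push_cast
  split_ifs <;> first | omega | simp

lemma GHZ_eq_smul {n : ℕ} (hn : 0 < n) :
    GHZ n = ((1 : ℂ) / Real.sqrt 2) •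
      (Pi.single (twoPowSubOne n 0 n.zero_le) 1 + Pi.single (twoPowSubOne n n le_rfl) 1) := by
  have hpow : 2 ≤ 2^n := Nat.le_self_pow hn.ne' 2
  ext x
  simp only [GHZ, Pi.smul_apply, Pi.add_apply, Pi.single_apply, Fin.ext_iff, twoPowSubOne,
    pow_zero, Nat.sub_self, smul_eq_mul]
  split_ifs <;> first | omega | simp

def plusToOne : Matrix (Fin 2) (Fin 2) ℂ := !![-1, 1; 1, 0]

lemma plusToOne_mulVec_single_one : plusToOne *ᵥ Pi.single 1 1 = Pi.single 0 1 := by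
  ext b; fin_cases b <;> simp [plusToOne]

lemma plusToOne_mulVec_one : plusToOne *ᵥ 1 = Pi.single 1 1 := by
  ext b; fin_cases b <;> simp [plusToOne, mulVec, dotProduct]

lemma isUnit_plusToOne : IsUnit plusToOne := by
  rw [isUnit_iff_isUnit_det, plusToOne, det_fin_two_of]
  norm_num

def ghzReduction (n : ℕ) : Fin n → Matrix (Fin 2) (Fin 2) ℂ :=
  fun i => if (i : ℕ) = 0 then 1 else plusToOne

lemma isUnit_ghzReduction {n : ℕ} (i : Fin n) : IsUnit (ghzReduction n i) := by
  unfold ghzReduction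
  split_ifs
  exacts [isUnit_one, isUnit_plusToOne]

lemma localMatrix_ghzReduction_mulVec_single {n : ℕ} :
    localMatrix n (ghzReduction n) *ᵥ Pi.single (twoPowSubOne n (n-1) (Nat.sub_le n 1)) 1 =
      Pi.single (twoPowSubOne n 0 n.zero_le) 1 := by
  have hcols : (fun i => ghzReduction n i *ᵥ
      Pi.single (bit n i (twoPowSubOne n (n-1) (Nat.sub_le n 1))) 1) = fun _ => Pi.single 0 1 := by
    funext i
    have hi := i.2
    rw [bit_twoPowSubOne, ghzReduction]
    by_cases h : (i : ℕ) = 0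
    · rw [if_pos h, one_mulVec, if_neg (by omega)]
    · rw [if_neg h, if_pos (by omega), plusToOne_mulVec_single_one]
  rw [← productState_single_bit, localMatrix_mulVec_productState, hcols,
    productState_const_single (m := twoPowSubOne n 0 n.zero_le) fun i => by
      rw [bit_twoPowSubOne]; simp]

lemma localMatrix_ghzReduction_mulVec_oneTensorPlus {n : ℕ} :
    localMatrix n (ghzReduction n) *ᵥ productState n (oneTensorPlus n) =
      Pi.single (twoPowSubOne n n le_rfl) 1 := by
  have hcols : (fun i => ghzReduction n i *ᵥ oneTensorPlus n i) = fun _ => Pi.single 1 1 := by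
    funext i
    by_cases h : (i : ℕ) = 0
    · simp only [ghzReduction, oneTensorPlus, if_pos h, one_mulVec]
    · simp only [ghzReduction, oneTensorPlus, if_neg h, plusToOne_mulVec_one]
  rw [localMatrix_mulVec_productState, hcols,
    productState_const_single (m := twoPowSubOne n n le_rfl) fun i => by
      rw [bit_twoPowSubOne, if_pos (by omega)]]

/-- `Ψ^n_{N/2−1,1} = (1/√(N/2+1)) (e_{N/2−1} + √(N/2) · |1⟩⊗|+⟩^{⊗(n−1)})`
and it is SLOCC-equivalent to `GHZ_n`. -/
theorem stmt_7 (n : ℕ) (hn : 2 ≤ n) :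
    (∀ x : Fin (2^n), periodicState n (2^(n-1) - 1) 1 x =
      ((1 / Real.sqrt (2^(n-1) + 1) : ℝ) : ℂ) *
        ((if (x : ℕ) = 2^(n-1) - 1 then (1 : ℂ) else 0) +
          ((Real.sqrt (2^(n-1)) : ℝ) : ℂ) *
            (if 2^(n-1) ≤ (x : ℕ) then ((1 / Real.sqrt (2^(n-1)) : ℝ) : ℂ) else 0))) ∧
    SLOCCEquiv n (periodicState n (2^(n-1) - 1) 1) (GHZ n) := by
  have hn0 : 0 < n := by omega
  have hψ := periodicState_half_sub_one hn0
  refine ⟨fun x => ?_, ?_⟩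
  · have hsqrt : (Real.sqrt (2^(n-1)) : ℂ) ≠ 0 := by
      exact_mod_cast (Real.sqrt_pos.2 (by positivity)).ne'
    rw [hψ, Pi.smul_apply, Pi.add_apply, Pi.single_apply, productState_oneTensorPlus hn0,
      smul_eq_mul]
    simp only [Fin.ext_iff, twoPowSubOne]
    push_cast
    split_ifs <;> simp [hsqrt]
  · have hsqrt : (Real.sqrt (2^(n-1) + 1) : ℂ) ≠ 0 := by
      exact_mod_cast (Real.sqrt_pos.2 (by positivity)).ne'
    refine sloccEquiv_of_eq_smul_mulVec (c := Real.sqrt (2^(n-1) + 1) / Real.sqrt 2)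
      (div_ne_zero hsqrt (by simp)) isUnit_ghzReduction ?_
    rw [GHZ_eq_smul hn0, hψ, mulVec_smul, mulVec_add, localMatrix_ghzReduction_mulVec_single,
      localMatrix_ghzReduction_mulVec_oneTensorPlus, smul_smul]
    congr 1
    field_simp
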